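/- Define f₁(m,n) = (2m-n, m), f₂(m,n) = (2m+n, m), f₃(m,n) = (2n+m, n). If (m,n) is a coprime pair with m > n > 0, then every pair appearing in the trinary tree generated from (m,n) by repeatedly applying f₁, f₂, f₃ is a coprime pair (a,b) with a > b > 0. -/
import Mathlib


/-- Membership in the trinary tree generated from `p` by the maps
`f₁(m,n) = (2m-n, m)`, `f₂(m,n) = (2m+n, m)`, `f₃(m,n) = (2n+m, n)`. -/
inductive InTree (p : ℤ × ℤ) : ℤ × ℤ → Prop
  | base : InTree p p
  | f1 {q : ℤ × ℤ} : InTree p q → InTree p (2 * q.1 - q.2, q.1)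
  | f2 {q : ℤ × ℤ} : InTree p q → InTree p (2 * q.1 + q.2, q.1)
  | f3 {q : ℤ × ℤ} : InTree p q → InTree p (2 * q.2 + q.1, q.2)

theorem stmt_17 (m n : ℤ) (hn : 0 < n) (hmn : n < m) (hcop : Int.gcd m n = 1) :
    ∀ q : ℤ × ℤ, InTree (m, n) q → Int.gcd q.1 q.2 = 1 ∧ q.2 < q.1 ∧ 0 < q.2 := by
  intro q hq
  induction hq with
  | base => exact ⟨hcop, hmn, hn⟩
  | @f1 r h ih =>
    obtain ⟨hc, hlt, hpos⟩ := ih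
    refine ⟨?_, by dsimp; linarith, by dsimp; linarith⟩
    have hco : IsCoprime r.2 r.1 := (Int.isCoprime_iff_gcd_eq_one.mpr hc).symm
    rw [← Int.isCoprime_iff_gcd_eq_one]
    have h2 : IsCoprime (-r.2 + 2 * r.1) r.1 := hco.neg_left.add_mul_right_left 2
    simpa [sub_eq_add_neg, add_comm, mul_comm] using h2
  | @f2 r h ih =>
    obtain ⟨hc, hlt, hpos⟩ := ih
    refine ⟨?_, by dsimp; linarith, by dsimp; linarith⟩
    have hco : IsCoprime r.2 r.1 := (Int.isCoprime_iff_gcd_eq_one.mpr hc).symm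
    rw [← Int.isCoprime_iff_gcd_eq_one]
    have h2 : IsCoprime (r.2 + 2 * r.1) r.1 := hco.add_mul_right_left 2
    simpa [add_comm, mul_comm] using h2
  | @f3 r h ih =>
    obtain ⟨hc, hlt, hpos⟩ := ih
    refine ⟨?_, by dsimp; linarith, by dsimp; linarith⟩
    have hco : IsCoprime r.1 r.2 := Int.isCoprime_iff_gcd_eq_one.mpr hc
    rw [← Int.isCoprime_iff_gcd_eq_one]
    have h2 : IsCoprime (r.1 + 2 * r.2) r.2 := hco.add_mul_right_left 2
    simpa [add_comm, mul_comm] using h2
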